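/- For all integers i ≥ 1 and k ≥ 1, one has x^{−2^k} · (x·c_i²)^{2^k} = c_{i+2^k−1}² · w_{i,i,k}; in particular c_{i+2^k−1}² · w_{i,i,k} ∈ Γ^{2^k}. (The identity used in the proof of Proposition 3.4 of the paper to show w_{i,i,k} ∈ G^{2^k}.) -/

import Mathlib

namespace Paper

variable {G : Type*} [Group G]

/-- The paper's commutator `[a,b] = a⁻¹ b⁻¹ a b`. -/
def pc {G : Type*} [Group G] (a b : G) : G := a⁻¹ * b⁻¹ * a * b

/-- The left-normed iterated commutator `[a, x, (r)…, x]`. -/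
def itc {G : Type*} [Group G] (x a : G) : ℕ → G
  | 0 => a
  | r + 1 => pc (itc x a r) x

/-- `c_i`, where `c_1 = y` and `c_{i+1} = [c_i, x]`; equivalently `c_i = [y, x, (i-1)…, x]`. -/
def cc (x y : G) (i : ℕ) : G := itc x y (i - 1)

/-- `z_{m,n} = [c_m, c_n]`. -/
def zz (x y : G) (m n : ℕ) : G := pc (cc x y m) (cc x y n)

/-- `H = ⟨c_i : i ≥ 1⟩`. -/
def Hsub (x y : G) : Subgroup G :=
  Subgroup.closure {g | ∃ i, 1 ≤ i ∧ g = cc x y i}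

/-- `Z = ⟨c_l², z_{m,n} : l, m, n ≥ 1⟩`. -/
def Zsub (x y : G) : Subgroup G :=
  Subgroup.closure ({g | ∃ l, 1 ≤ l ∧ g = cc x y l ^ 2} ∪
    {g | ∃ m n, 1 ≤ m ∧ 1 ≤ n ∧ g = zz x y m n})

/-- `w_{i,j,k} = ∏_{t=1}^{2^k−1} [z_{i+t,j+t−1}, x, (2^k−1−t)…, x]`,
factors in order of increasing `t` (reindexed by `t ↦ t+1`). -/
def ww (x y : G) (i j k : ℕ) : G :=
  ((List.range (2 ^ k - 1)).map
    (fun t => itc x (zz x y (i + t + 1) (j + t)) (2 ^ k - 2 - t))).prod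

/-- `L_k`, the normal closure of `{w_{i,j,k} : i,j ≥ 1} ∪ {z_{m,n} : m ≥ 2^k, n ≥ 1}`. -/
def Lsub (x y : G) (k : ℕ) : Subgroup G :=
  Subgroup.normalClosure ({g | ∃ i j, 1 ≤ i ∧ 1 ≤ j ∧ g = ww x y i j k} ∪
    {g | ∃ m n, 2 ^ k ≤ m ∧ 1 ≤ n ∧ g = zz x y m n})

/-- `Q_k = ⟨c_l² : l ≥ 2^{k−1}⟩`. -/
def Qsub (x y : G) (k : ℕ) : Subgroup G :=
  Subgroup.closure {g | ∃ l, 2 ^ (k - 1) ≤ l ∧ g = cc x y l ^ 2}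

/-- `d_k(h) = [h,x,(2^k−1)…,x]⁻¹ · x^{−2^k} · (xh)^{2^k}`. -/
def dd (x y : G) (k : ℕ) (h : G) : G :=
  (itc x h (2 ^ k - 1))⁻¹ * (x ^ 2 ^ k)⁻¹ * (x * h) ^ 2 ^ k

/-- `Γ^{2^k} = ⟨g^{2^k} : g ∈ Γ⟩`. -/
def pow2Sub (G : Type*) [Group G] (k : ℕ) : Subgroup G :=
  Subgroup.closure {g | ∃ a : G, g = a ^ 2 ^ k}

/-- `ζ(h₁,h₂) = ∏_{ℓ=0}^{2^k−2} [h₁^x, x, (ℓ)…, x, h₂, x, (2^k−2−ℓ)…, x]`,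
factors in order of increasing `ℓ`. -/
def zeta (x : G) (k : ℕ) (h₁ h₂ : G) : G :=
  ((List.range (2 ^ k - 1)).map
    (fun l => itc x (pc (itc x (x⁻¹ * h₁ * x) l) h₂) (2 ^ k - 2 - l))).prod

/-!
Write `δ z = [z, x]`. On `Z`, which is abelian of exponent 2 and normalized by `x`, `δ` is an
endomorphism and conjugation by `x` is `1 + δ`; in characteristic 2 this gives
`x^{-2^k} z x^{2^k} = z · δ^{2^k} z`, and by doubling `x^{-2^k} (x h)^{2^k} = δ^{2^k-1} h` for
`h ∈ Z`. For `h = c_i²` one has `δ (c_j²) = c_{j+1}² z_{j+1,j}`; as `δ` is a homomorphism on `Z`,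
iterating gives `δ^r (c_i²) = c_{i+r}² ∏_{t<r} δ^{r-1-t} z_{i+t+1,i+t}`, which for `r = 2^k - 1`
is `c_{i+2^k-1}² · w_{i,i,k}`.
-/

lemma conj_eq_mul_pc (a b : G) : b⁻¹ * a * b = a * pc a b := by
  simp only [pc]; group

lemma pc_conj (g a b : G) : g⁻¹ * pc a b * g = pc (g⁻¹ * a * g) (g⁻¹ * b * g) := by
  simp only [pc]; group

lemma pc_mul_left_of_commute {a b c : G} (h : Commute (pc a c) b) :
    pc (a * b) c = pc a c * pc b c := by
  calc pc (a * b) c = b⁻¹ * (pc a c * b) * (b⁻¹ * c⁻¹ * b * c) := by simp only [pc]; group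
    _ = pc a c * pc b c := by rw [h.eq]; simp only [pc]; group

lemma pc_mul_right_of_commute {a c d : G} (h : Commute (pc a c) d) :
    pc a (c * d) = pc a d * pc a c := by
  calc pc a (c * d) = a⁻¹ * d⁻¹ * a * (pc a c * d) := by simp only [pc]; group
    _ = pc a d * pc a c := by rw [h.eq]; simp only [pc]; group

lemma mul_sq_of_commute_pc {a b : G} (h : Commute (pc b a) b) :
    (a * b) ^ 2 = a ^ 2 * b ^ 2 * pc b a := by
  calc (a * b) ^ 2 = a ^ 2 * b * (pc b a * b) := by simp only [pc, sq]; group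
    _ = a ^ 2 * b ^ 2 * pc b a := by rw [h.eq]; simp only [sq, mul_assoc]

lemma itc_itc (x a : G) (r s : ℕ) : itc x (itc x a r) s = itc x a (r + s) := by
  induction s with
  | zero => rfl
  | succ s ih => simp only [itc, ih]; rfl

section NormalizedAbelian

variable {Z : Subgroup G} {x : G}

lemma pc_mem_of_conj_mem (hx : ∀ z ∈ Z, x⁻¹ * z * x ∈ Z) {z : G} (hz : z ∈ Z) :
    pc z x ∈ Z := by
  rw [show pc z x = z⁻¹ * (x⁻¹ * z * x) by simp only [pc]; group]
  exact mul_mem (inv_mem hz) (hx z hz)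

lemma itc_mem_of_conj_mem (hx : ∀ z ∈ Z, x⁻¹ * z * x ∈ Z) {z : G} (hz : z ∈ Z) (r : ℕ) :
    itc x z r ∈ Z := by
  induction r with
  | zero => exact hz
  | succ r ih => exact pc_mem_of_conj_mem hx ih

lemma itc_mul_of_mem (hZ : ∀ a ∈ Z, ∀ b ∈ Z, Commute a b) (hx : ∀ z ∈ Z, x⁻¹ * z * x ∈ Z)
    {z w : G} (hz : z ∈ Z) (hw : w ∈ Z) (r : ℕ) :
    itc x (z * w) r = itc x z r * itc x w r := by
  induction r with
  | zero => rfl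
  | succ r ih =>
    simp only [itc, ih]
    exact pc_mul_left_of_commute
      (hZ _ (pc_mem_of_conj_mem hx (itc_mem_of_conj_mem hx hz r)) _ (itc_mem_of_conj_mem hx hw r))

lemma itc_list_prod (hZ : ∀ a ∈ Z, ∀ b ∈ Z, Commute a b) (hx : ∀ z ∈ Z, x⁻¹ * z * x ∈ Z)
    (l : List G) (hl : ∀ g ∈ l, g ∈ Z) (r : ℕ) :
    itc x l.prod r = (l.map (itc x · r)).prod := by
  induction l with
  | nil =>
    simp only [List.prod_nil, List.map_nil]
    induction r with
    | zero => rfl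
    | succ r ih => simp [itc, ih, pc]
  | cons a l ih =>
    have hl' : ∀ g ∈ l, g ∈ Z := fun g hg => hl g (List.mem_cons_of_mem a hg)
    rw [List.prod_cons, List.map_cons, List.prod_cons, ← ih hl',
      itc_mul_of_mem hZ hx (hl a List.mem_cons_self) (list_prod_mem hl')]

lemma conj_two_pow_of_mem (hx : ∀ z ∈ Z, x⁻¹ * z * x ∈ Z) (hZ2 : ∀ z ∈ Z, z ^ 2 = 1) (k : ℕ)
    {z : G} (hz : z ∈ Z) :
    (x ^ 2 ^ k)⁻¹ * z * x ^ 2 ^ k = z * itc x z (2 ^ k) := by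
  induction k generalizing z with
  | zero => simp only [pow_zero, pow_one]; exact conj_eq_mul_pc z x
  | succ k ih =>
    have hδz := itc_mem_of_conj_mem hx hz (2 ^ k)
    calc (x ^ 2 ^ (k + 1))⁻¹ * z * x ^ 2 ^ (k + 1)
        = (x ^ 2 ^ k)⁻¹ * ((x ^ 2 ^ k)⁻¹ * z * x ^ 2 ^ k) * x ^ 2 ^ k := by
          rw [pow_succ, pow_mul, sq]; simp only [mul_inv_rev, mul_assoc]
      _ = (x ^ 2 ^ k)⁻¹ * (z * itc x z (2 ^ k)) * x ^ 2 ^ k := by rw [ih hz]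
      _ = ((x ^ 2 ^ k)⁻¹ * z * x ^ 2 ^ k)
            * ((x ^ 2 ^ k)⁻¹ * itc x z (2 ^ k) * x ^ 2 ^ k) := by group
      _ = z * itc x z (2 ^ k) ^ 2 * itc x (itc x z (2 ^ k)) (2 ^ k) := by
          rw [ih hz, ih hδz]; simp only [sq, mul_assoc]
      _ = z * itc x z (2 ^ (k + 1)) := by
          rw [hZ2 _ hδz, itc_itc, ← two_mul, ← pow_succ', mul_one]

lemma inv_pow_mul_mul_pow_of_mem (hZ : ∀ a ∈ Z, ∀ b ∈ Z, Commute a b)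
    (hx : ∀ z ∈ Z, x⁻¹ * z * x ∈ Z) (hZ2 : ∀ z ∈ Z, z ^ 2 = 1) (k : ℕ) {h : G} (hh : h ∈ Z) :
    (x ^ 2 ^ k)⁻¹ * (x * h) ^ 2 ^ k = itc x h (2 ^ k - 1) := by
  induction k with
  | zero => simp [itc]
  | succ k ih =>
    have hD : (x ^ 2 ^ k)⁻¹ * (x * h) ^ 2 ^ k ∈ Z := ih ▸ itc_mem_of_conj_mem hx hh _
    generalize hD_def : (x ^ 2 ^ k)⁻¹ * (x * h) ^ 2 ^ k = D at hD ih
    have hδD := itc_mem_of_conj_mem hx hD (2 ^ k)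
    calc (x ^ 2 ^ (k + 1))⁻¹ * (x * h) ^ 2 ^ (k + 1)
        = (x ^ 2 ^ k)⁻¹ * D * x ^ 2 ^ k * D := by
          rw [← hD_def, pow_succ, pow_mul, pow_mul, sq, sq]; group
      _ = itc x D (2 ^ k) * D ^ 2 := by
          rw [conj_two_pow_of_mem hx hZ2 k hD, (hZ _ hD _ hδD).eq]
          simp only [sq, mul_assoc]
      _ = itc x h (2 ^ (k + 1) - 1) := by
          rw [hZ2 D hD, mul_one, ih, itc_itc, pow_succ]
          congr 1
          have : 1 ≤ 2 ^ k := Nat.one_le_two_pow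
          omega

def itcProd (x : G) (b : ℕ → G) (r : ℕ) : G :=
  ((List.range r).map fun t => itc x (b t) (r - 1 - t)).prod

lemma itc_mem_of_mem_map_range (hx : ∀ z ∈ Z, x⁻¹ * z * x ∈ Z) {b : ℕ → G}
    (hb : ∀ t, b t ∈ Z) (r : ℕ) :
    ∀ g ∈ (List.range r).map fun t => itc x (b t) (r - 1 - t), g ∈ Z := by
  simp only [List.mem_map]
  rintro g ⟨t, -, rfl⟩
  exact itc_mem_of_conj_mem hx (hb t) _

lemma itcProd_mem (hx : ∀ z ∈ Z, x⁻¹ * z * x ∈ Z) {b : ℕ → G} (hb : ∀ t, b t ∈ Z) (r : ℕ) :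
    itcProd x b r ∈ Z :=
  list_prod_mem (itc_mem_of_mem_map_range hx hb r)

lemma pc_itcProd_mul (hZ : ∀ a ∈ Z, ∀ b ∈ Z, Commute a b) (hx : ∀ z ∈ Z, x⁻¹ * z * x ∈ Z)
    {b : ℕ → G} (hb : ∀ t, b t ∈ Z) (r : ℕ) :
    pc (itcProd x b r) x * b r = itcProd x b (r + 1) := by
  rw [itcProd, itcProd, List.range_succ, List.map_append, List.prod_append,
    show ∀ g, pc g x = itc x g 1 from fun _ => rfl,
    itc_list_prod hZ hx _ (itc_mem_of_mem_map_range hx hb r), List.map_map]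
  simp only [List.map_cons, List.map_nil, List.prod_cons, List.prod_nil, mul_one,
    Nat.add_sub_cancel, Nat.sub_self]
  refine congrArg (· * b r) (congrArg List.prod (List.map_congr_left fun t ht => ?_))
  rw [List.mem_range] at ht
  simp only [Function.comp_apply, itc_itc]
  congr 1
  omega

lemma itc_eq_mul_itcProd (hZ : ∀ a ∈ Z, ∀ b ∈ Z, Commute a b)
    (hx : ∀ z ∈ Z, x⁻¹ * z * x ∈ Z) {a b : ℕ → G} (ha : ∀ t, a t ∈ Z) (hb : ∀ t, b t ∈ Z)
    (hab : ∀ t, pc (a t) x = a (t + 1) * b t) (r : ℕ) :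
    itc x (a 0) r = a r * itcProd x b r := by
  induction r with
  | zero => simp [itc, itcProd]
  | succ r ih =>
    have hP := itcProd_mem hx hb r
    calc itc x (a 0) (r + 1) = pc (a r) x * pc (itcProd x b r) x := by
          simp only [itc, ih]
          exact pc_mul_left_of_commute (hZ _ (pc_mem_of_conj_mem hx (ha r)) _ hP)
      _ = a (r + 1) * (pc (itcProd x b r) x * b r) := by
          rw [hab, mul_assoc, (hZ _ (hb r) _ (pc_mem_of_conj_mem hx hP)).eq]
      _ = a (r + 1) * itcProd x b (r + 1) := by rw [pc_itcProd_mul hZ hx hb]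

end NormalizedAbelian

section Generators

variable {x y : G}

lemma cc_mem_Hsub {i : ℕ} (hi : 1 ≤ i) : cc x y i ∈ Hsub x y :=
  Subgroup.subset_closure ⟨i, hi, rfl⟩

lemma cc_sq_mem_Zsub {l : ℕ} (hl : 1 ≤ l) : cc x y l ^ 2 ∈ Zsub x y :=
  Subgroup.subset_closure (Or.inl ⟨l, hl, rfl⟩)

lemma zz_mem_Zsub {m n : ℕ} (hm : 1 ≤ m) (hn : 1 ≤ n) : zz x y m n ∈ Zsub x y :=
  Subgroup.subset_closure (Or.inr ⟨m, n, hm, hn, rfl⟩)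

lemma Zsub_le_Hsub : Zsub x y ≤ Hsub x y := by
  rw [Zsub, Subgroup.closure_le]
  rintro g (⟨l, hl, rfl⟩ | ⟨m, n, hm, hn, rfl⟩)
  · exact pow_mem (cc_mem_Hsub hl) 2
  · have hcm := cc_mem_Hsub (x := x) (y := y) hm
    have hcn := cc_mem_Hsub (x := x) (y := y) hn
    exact mul_mem (mul_mem (mul_mem (inv_mem hcm) (inv_mem hcn)) hcm) hcn

lemma commute_of_mem_Zsub (hca : ∀ z ∈ Zsub x y, ∀ h ∈ Hsub x y, z * h = h * z) :
    ∀ a ∈ Zsub x y, ∀ b ∈ Zsub x y, Commute a b :=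
  fun a ha b hb => hca a ha b (Zsub_le_Hsub hb)

lemma cc_succ {i : ℕ} (hi : 1 ≤ i) : cc x y (i + 1) = pc (cc x y i) x := by
  rw [cc, cc, show i + 1 - 1 = i - 1 + 1 by omega]
  rfl

lemma pc_cc_sq (hca : ∀ z ∈ Zsub x y, ∀ h ∈ Hsub x y, z * h = h * z) {j : ℕ} (hj : 1 ≤ j) :
    pc (cc x y j ^ 2) x = cc x y (j + 1) ^ 2 * zz x y (j + 1) j := by
  have hcomm : Commute (pc (cc x y (j + 1)) (cc x y j)) (cc x y (j + 1)) :=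
    hca _ (zz_mem_Zsub (by omega) hj) _ (cc_mem_Hsub (by omega))
  calc pc (cc x y j ^ 2) x = (cc x y j ^ 2)⁻¹ * (x⁻¹ * cc x y j * x) ^ 2 := by
        simp only [pc, sq]; group
    _ = (cc x y j ^ 2)⁻¹ * (cc x y j * cc x y (j + 1)) ^ 2 := by
        rw [conj_eq_mul_pc, cc_succ hj]
    _ = cc x y (j + 1) ^ 2 * zz x y (j + 1) j := by
        rw [mul_sq_of_commute_pc hcomm, zz]; group

lemma conj_zz_mem_Zsub (hca : ∀ z ∈ Zsub x y, ∀ h ∈ Hsub x y, z * h = h * z) {m n : ℕ}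
    (hm : 1 ≤ m) (hn : 1 ≤ n) : x⁻¹ * zz x y m n * x ∈ Zsub x y := by
  -- `z_{m,n}^x = [c_m c_{m+1}, c_n c_{n+1}]` expands into four `z`'s.
  have hcomm {p q : ℕ} (hp : 1 ≤ p) (hq : 1 ≤ q) (l : ℕ) (hl : 1 ≤ l) :
      Commute (zz x y p q) (cc x y l) :=
    hca _ (zz_mem_Zsub hp hq) _ (cc_mem_Hsub hl)
  have hexpand_m : pc (cc x y m) (cc x y n * cc x y (n + 1)) = zz x y m (n + 1) * zz x y m n :=
    pc_mul_right_of_commute (hcomm hm hn _ (by omega))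
  have hexpand_m1 : pc (cc x y (m + 1)) (cc x y n * cc x y (n + 1))
      = zz x y (m + 1) (n + 1) * zz x y (m + 1) n :=
    pc_mul_right_of_commute (hcomm (by omega) hn _ (by omega))
  have hcomm_m1 : Commute (pc (cc x y m) (cc x y n * cc x y (n + 1))) (cc x y (m + 1)) := by
    rw [hexpand_m]
    exact hca _ (mul_mem (zz_mem_Zsub hm (by omega)) (zz_mem_Zsub hm hn)) _
      (cc_mem_Hsub (by omega))
  rw [zz, pc_conj, conj_eq_mul_pc, conj_eq_mul_pc, ← cc_succ hm, ← cc_succ hn,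
    pc_mul_left_of_commute hcomm_m1, hexpand_m, hexpand_m1]
  exact mul_mem (mul_mem (zz_mem_Zsub hm (by omega)) (zz_mem_Zsub hm hn))
    (mul_mem (zz_mem_Zsub (by omega) (by omega)) (zz_mem_Zsub (by omega) hn))

lemma conj_mem_Zsub (hca : ∀ z ∈ Zsub x y, ∀ h ∈ Hsub x y, z * h = h * z) {z : G}
    (hz : z ∈ Zsub x y) : x⁻¹ * z * x ∈ Zsub x y := by
  suffices Zsub x y ≤ (Zsub x y).comap (MulAut.conj x⁻¹).toMonoidHom by
    simpa using this hz
  refine (Subgroup.closure_le _).mpr ?_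
  rintro g (⟨l, hl, rfl⟩ | ⟨m, n, hm, hn, rfl⟩) <;>
    simp only [SetLike.mem_coe, Subgroup.mem_comap, MulEquiv.coe_toMonoidHom, MulAut.conj_apply,
      inv_inv]
  · rw [conj_eq_mul_pc, pc_cc_sq hca hl, ← mul_assoc]
    exact mul_mem (mul_mem (cc_sq_mem_Zsub hl) (cc_sq_mem_Zsub (by omega)))
      (zz_mem_Zsub (by omega) hl)
  · exact conj_zz_mem_Zsub hca hm hn

lemma itc_cc_sq_two_pow_sub_one (hca : ∀ z ∈ Zsub x y, ∀ h ∈ Hsub x y, z * h = h * z)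
    {i : ℕ} (hi : 1 ≤ i) (k : ℕ) :
    itc x (cc x y i ^ 2) (2 ^ k - 1) = cc x y (i + 2 ^ k - 1) ^ 2 * ww x y i i k := by
  have key := itc_eq_mul_itcProd (a := fun t => cc x y (i + t) ^ 2)
    (b := fun t => zz x y (i + t + 1) (i + t)) (commute_of_mem_Zsub hca)
    (fun _ => conj_mem_Zsub hca)
    (fun t => cc_sq_mem_Zsub (by omega)) (fun t => zz_mem_Zsub (by omega) (by omega))
    (fun t => pc_cc_sq hca (by omega)) (2 ^ k - 1)
  rw [ww, show i + 2 ^ k - 1 = i + (2 ^ k - 1) by have := Nat.one_le_two_pow (n := k); omega]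
  simpa only [itcProd, Nat.sub_sub, add_zero] using key

end Generators

lemma inv_pow_mul_pow_mem_pow2Sub (a b : G) (k : ℕ) :
    (a ^ 2 ^ k)⁻¹ * b ^ 2 ^ k ∈ pow2Sub G k :=
  mul_mem (inv_mem (Subgroup.subset_closure ⟨a, rfl⟩)) (Subgroup.subset_closure ⟨b, rfl⟩)

theorem ww_diag_power_identity_general (x y : G)
    (hca : ∀ z ∈ Zsub x y, ∀ h ∈ Hsub x y, z * h = h * z)
    (hz2 : ∀ z ∈ Zsub x y, z ^ 2 = 1)
    (i k : ℕ) (hi : 1 ≤ i) :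
    (x ^ 2 ^ k)⁻¹ * (x * cc x y i ^ 2) ^ 2 ^ k =
        cc x y (i + 2 ^ k - 1) ^ 2 * ww x y i i k ∧
      cc x y (i + 2 ^ k - 1) ^ 2 * ww x y i i k ∈ pow2Sub G k := by
  have hid : (x ^ 2 ^ k)⁻¹ * (x * cc x y i ^ 2) ^ 2 ^ k =
      cc x y (i + 2 ^ k - 1) ^ 2 * ww x y i i k := by
    rw [inv_pow_mul_mul_pow_of_mem (commute_of_mem_Zsub hca) (fun _ => conj_mem_Zsub hca) hz2 k
      (cc_sq_mem_Zsub hi), itc_cc_sq_two_pow_sub_one hca hi]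
  exact ⟨hid, hid ▸ inv_pow_mul_pow_mem_pow2Sub x _ k⟩

theorem ww_diag_power_identity (x y : G)
    (hca : ∀ z ∈ Zsub x y, ∀ h ∈ Hsub x y, z * h = h * z)
    (hz2 : ∀ z ∈ Zsub x y, z ^ 2 = 1)
    (i k : ℕ) (hi : 1 ≤ i) (hk : 1 ≤ k) :
    (x ^ 2 ^ k)⁻¹ * (x * cc x y i ^ 2) ^ 2 ^ k =
        cc x y (i + 2 ^ k - 1) ^ 2 * ww x y i i k ∧
      cc x y (i + 2 ^ k - 1) ^ 2 * ww x y i i k ∈ pow2Sub G k :=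
  ww_diag_power_identity_general x y hca hz2 i k hi

end Paper
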